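/- arXiv:1001.2548 — 5 statements merged into one kernel-verified Lean document; each statement's English description precedes it below -/
import Mathlib

section
/- For every integer m ≥ 1, the subword complexity of 𝔭₂ satisfies the upper bound (p(𝔭₂, m) : ℝ) ≤ (m − log₂ m)(m + log₂ m + 2)/2 + 2m, where log₂ denotes the base-2 logarithm (Real.logb 2). -/
/-- The subword complexity of a sequence `a : ℕ → A`: the number of distinct
factors of length `m` occurring in `a`. -/
noncomputable def subwordComplexity {A : Type*} (a : ℕ → A) (m : ℕ) : ℕ :=
  Set.ncard { w : Fin m → A | ∃ j : ℕ, ∀ i : Fin m, w i = a (j + i) }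

open Classical in
/-- The coefficient sequence 𝔭₂ of `1/Π₂`: `𝔭₂ n = 1` iff `n` is a sum of distinct
terms of the form `2^j - 1` with `j ≥ 1` (the empty sum giving `n = 0`). -/
noncomputable def p2 (n : ℕ) : Fin 2 :=
  if ∃ J : Finset ℕ, (∀ j ∈ J, 1 ≤ j) ∧ n = ∑ j ∈ J, (2 ^ j - 1) then 1 else 0

/-!
Write `B_K = [2^K - 1, 2^(K+1) - 2]` for the `K`-th block of positions. A sum of distinct
`2^j - 1` lying in `B_K` must use `j = K`, since the smaller terms add up to less than `2^K - K`;
hence `B_K` starts with a copy of the prefix `p2 0, …, p2 (2^K - 2)` and ends with `K` zeros.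
A factor of length `m` either fits inside the copy, and then already occurs `2^K - 1` places
earlier, or starts `s < m` places before the end of some `B_K`. When `s < K` and
`m ≤ 2^(K+1)` it is `0^(s+1)` followed by a prefix of `p2`, giving at most `m` factors;
otherwise `K < L := ⌊log₂ m⌋` (at most `2^K` factors for this `K`) or `K ≤ s < m` (at most
`m - K`). Summing gives `2 p(m) + 2 ≤ 4m + (m - L)(m - L + 1)`, and the real bound follows from
`L ≤ log₂ m < L + 1`.
-/

open Finset

theorem subwordComplexity_le_card {A : Type*} (a : ℕ → A) (m : ℕ) (D : Finset ℕ)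
    (hD : ∀ j, ∃ j' ∈ D, ∀ i : Fin m, a (j' + i) = a (j + i)) :
    subwordComplexity a m ≤ D.card := by
  have hsub : { w : Fin m → A | ∃ j : ℕ, ∀ i : Fin m, w i = a (j + i) } ⊆
      (fun j (i : Fin m) => a (j + i)) '' D := by
    rintro w ⟨j, hw⟩
    obtain ⟨j', hj', heq⟩ := hD j
    exact ⟨j', hj', funext fun i => (heq i).trans (hw i).symm⟩
  calc subwordComplexity a m ≤ ((fun j (i : Fin m) => a (j + i)) '' D).ncard :=
        Set.ncard_le_ncard hsub (D.finite_toSet.image _)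
    _ ≤ (D : Set ℕ).ncard := Set.ncard_image_le D.finite_toSet
    _ = D.card := Set.ncard_coe_finset D

theorem sum_Ico_sub_mul_two (L m : ℕ) : (∑ K ∈ Ico L m, (m - K)) * 2 = (m - L) * (m - L + 1) := by
  rcases lt_or_ge m L with h | h
  · simp [Ico_eq_empty_of_le h.le, Nat.sub_eq_zero_of_le h.le]
  have hN : m + 1 - L = m - L + 1 := by omega
  have := sum_range_id_mul_two (m - L + 1)
  rw [sum_range_succ', add_zero, Nat.add_sub_cancel, mul_comm (m - L + 1)] at this
  rw [sum_Ico_reflect (fun j => j) L (Nat.le_succ m), hN, sum_Ico_eq_sum_range, ← this]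
  simp only [Nat.add_sub_cancel_left, Nat.add_sub_cancel, add_comm 1]

namespace P2

def IsMersenneSum (n : ℕ) : Prop :=
  ∃ J : Finset ℕ, (∀ j ∈ J, 1 ≤ j) ∧ n = ∑ j ∈ J, (2 ^ j - 1)

theorem sum_range_two_pow_sub_one_add (K : ℕ) : ∑ j ∈ range K, (2 ^ j - 1) + K + 1 = 2 ^ K := by
  induction K with
  | zero => simp
  | succ K ih =>
    rw [sum_range_succ, pow_succ]
    have := Nat.one_le_two_pow (n := K)
    omega

theorem sum_two_pow_sub_one_add_lt {J : Finset ℕ} {K : ℕ} (hJ : J ⊆ range K) :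
    ∑ j ∈ J, (2 ^ j - 1) + K < 2 ^ K := by
  have := sum_le_sum_of_subset (f := fun j => 2 ^ j - 1) hJ
  have := sum_range_two_pow_sub_one_add K
  omega

theorem subset_range_of_sum_two_pow_sub_one {J : Finset ℕ} {n K : ℕ}
    (hn : n = ∑ j ∈ J, (2 ^ j - 1)) (hK : n + 1 < 2 ^ K) : J ⊆ range K := by
  intro j hj
  have : 2 ^ j - 1 ≤ n := hn ▸ single_le_sum (f := fun j => 2 ^ j - 1) (by simp) hj
  rw [mem_range, ← Nat.pow_lt_pow_iff_right (by norm_num : 1 < 2)]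
  have := Nat.one_le_two_pow (n := j)
  omega

theorem isMersenneSum_two_pow_sub_one_add_iff {K t : ℕ} (h : t + 2 ≤ 2 ^ K) :
    IsMersenneSum (2 ^ K - 1 + t) ↔ IsMersenneSum t := by
  have hK : 1 ≤ K := Nat.one_le_iff_ne_zero.mpr (by rintro rfl; omega)
  constructor
  · rintro ⟨J, hJ₁, hJ₂⟩
    have hJK : J ⊆ range (K + 1) :=
      subset_range_of_sum_two_pow_sub_one hJ₂ (by rw [pow_succ]; omega)
    have hKJ : K ∈ J := by
      by_contra hKJ
      have := sum_two_pow_sub_one_add_lt (J := J) (K := K) fun j hj => by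
        have := mem_range.mp (hJK hj)
        exact mem_range.mpr (lt_of_le_of_ne (by omega) fun e => hKJ (e ▸ hj))
      omega
    refine ⟨J.erase K, fun j hj => hJ₁ j (mem_of_mem_erase hj), ?_⟩
    have := add_sum_erase J (fun j => 2 ^ j - 1) hKJ
    omega
  · rintro ⟨J, hJ₁, hJ₂⟩
    have hKJ : K ∉ J := fun hKJ =>
      absurd (subset_range_of_sum_two_pow_sub_one (K := K) hJ₂ (by omega) hKJ) (by simp)
    refine ⟨insert K J, by simpa [hK] using hJ₁, ?_⟩
    rw [sum_insert hKJ, hJ₂]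

theorem not_isMersenneSum {K n : ℕ} (h₁ : 2 ^ K ≤ n + K) (h₂ : n + 2 ≤ 2 ^ K) :
    ¬IsMersenneSum n := by
  rintro ⟨J, -, hJ⟩
  have := sum_two_pow_sub_one_add_lt (subset_range_of_sum_two_pow_sub_one (K := K) hJ (by omega))
  omega

open Classical in
theorem p2_eq_ite (n : ℕ) : p2 n = if IsMersenneSum n then 1 else 0 := rfl

theorem p2_congr {n n' : ℕ} (h : IsMersenneSum n ↔ IsMersenneSum n') : p2 n = p2 n' := by
  rw [p2_eq_ite, p2_eq_ite]
  split_ifs <;> tauto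

theorem p2_two_pow_sub_one_add {K t : ℕ} (h : t + 2 ≤ 2 ^ K) : p2 (2 ^ K - 1 + t) = p2 t :=
  p2_congr (isMersenneSum_two_pow_sub_one_add_iff h)

theorem p2_eq_zero {K n : ℕ} (h₁ : 2 ^ K ≤ n + K) (h₂ : n + 2 ≤ 2 ^ K) : p2 n = 0 := by
  simp only [p2_eq_ite, not_isMersenneSum h₁ h₂, if_false]

theorem p2_across_block_end {K m s i : ℕ} (hsK : s < K) (hm : m ≤ 2 ^ (K + 1)) (hi : i < m) :
    p2 (2 ^ (K + 1) - 2 - s + i) = if i ≤ s then 0 else p2 (i - s - 1) := by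
  have hK : K + 2 ≤ 2 ^ (K + 1) := Nat.lt_two_pow_self
  split_ifs with his
  · exact p2_eq_zero (K := K + 1) (by omega) (by omega)
  · rw [← p2_two_pow_sub_one_add (K := K + 1) (t := i - s - 1) (by omega)]
    congr 1
    omega

theorem p2_across_block_end_eq {K m s i : ℕ} (hsK : s < K) (hsm : s < m) (hm : m ≤ 2 ^ (K + 1))
    (hi : i < m) : p2 (2 ^ (K + 1) - 2 - s + i) = p2 (2 ^ (m + 1) - 2 - s + i) := by
  have : m + 1 < 2 ^ (m + 1) := Nat.lt_two_pow_self
  rw [p2_across_block_end hsK hm hi, p2_across_block_end hsm (by omega) hi]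

/-- Position `2 ^ (K + 1) - 2 - s` lies `s` places before the end of `B_K`; the first family
represents all factors `0^(s+1)` followed by a prefix of `p2`. -/
def startSet (m : ℕ) : Finset ℕ :=
  (range m).image (fun s => 2 ^ (m + 1) - 2 - s) ∪
    (range (Nat.log 2 m)).biUnion (fun K => (range (2 ^ K)).image fun s => 2 ^ (K + 1) - 2 - s) ∪
    (Ico (Nat.log 2 m) m).biUnion (fun K => (Ico K m).image fun s => 2 ^ (K + 1) - 2 - s)

theorem exists_mem_startSet {m : ℕ} (hm : 1 ≤ m) (j : ℕ) :
    ∃ j' ∈ startSet m, ∀ i : Fin m, p2 (j' + i) = p2 (j + i) := by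
  induction j using Nat.strong_induction_on with
  | _ j ih =>
  set K := Nat.log 2 (j + 1)
  have hK₁ : 2 ^ K ≤ j + 1 := Nat.pow_log_le_self 2 (by omega)
  have hK₂ : j + 1 < 2 ^ (K + 1) := Nat.lt_pow_succ_log_self one_lt_two _
  have hpow : 2 ^ (K + 1) = 2 * 2 ^ K := pow_succ' 2 K
  set s := 2 ^ (K + 1) - 2 - j
  by_cases hs : m ≤ s
  · obtain ⟨j', hj', heq⟩ := ih (j - (2 ^ K - 1)) (by omega)
    refine ⟨j', hj', fun i => (heq i).trans ?_⟩
    rw [← p2_two_pow_sub_one_add (K := K) (t := j - (2 ^ K - 1) + i) (by omega)]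
    congr 1
    omega
  have hj : j = 2 ^ (K + 1) - 2 - s := by omega
  by_cases hpad : s < K ∧ m ≤ 2 ^ (K + 1)
  · refine ⟨2 ^ (m + 1) - 2 - s, ?_, fun i => ?_⟩
    · exact mem_union_left _ (mem_union_left _ (mem_image_of_mem _ (mem_range.mpr (by omega))))
    · rw [hj, p2_across_block_end_eq hpad.1 (by omega) hpad.2 i.isLt]
  refine ⟨j, ?_, fun _ => rfl⟩
  set L := Nat.log 2 m
  rcases lt_or_ge K L with hKL | hKL
  · refine mem_union_left _ (mem_union_right _ (mem_biUnion.mpr ⟨K, mem_range.mpr hKL, ?_⟩))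
    exact mem_image.mpr ⟨s, mem_range.mpr (by omega), hj.symm⟩
  · have hmL : m < 2 ^ (L + 1) := Nat.lt_pow_succ_log_self one_lt_two m
    have hLK : 2 ^ (L + 1) ≤ 2 ^ (K + 1) := Nat.pow_le_pow_right two_pos (by omega)
    have hKm : K < m := by
      by_contra
      exact hpad ⟨by omega, by omega⟩
    refine mem_union_right _ (mem_biUnion.mpr ⟨K, mem_Ico.mpr ⟨hKL, hKm⟩, ?_⟩)
    exact mem_image.mpr ⟨s, mem_Ico.mpr ⟨by omega, by omega⟩, hj.symm⟩

theorem card_startSet_le (m : ℕ) :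
    (startSet m).card ≤ m + (2 ^ Nat.log 2 m - 1) + ∑ K ∈ Ico (Nat.log 2 m) m, (m - K) := by
  set L := Nat.log 2 m
  have hpad : ((range m).image fun s => 2 ^ (m + 1) - 2 - s).card ≤ m :=
    card_image_le.trans (card_range m).le
  have hsmall : ((range L).biUnion fun K =>
      (range (2 ^ K)).image fun s => 2 ^ (K + 1) - 2 - s).card ≤ 2 ^ L - 1 :=
    calc _ ≤ ∑ K ∈ range L, 2 ^ K :=
          card_biUnion_le.trans (sum_le_sum fun K _ => card_image_le.trans (card_range _).le)
      _ = 2 ^ L - 1 := by rw [Nat.geomSum_eq le_rfl, Nat.add_one_sub_one, Nat.div_one]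
  have hlarge : ((Ico L m).biUnion fun K =>
      (Ico K m).image fun s => 2 ^ (K + 1) - 2 - s).card ≤ ∑ K ∈ Ico L m, (m - K) :=
    card_biUnion_le.trans (sum_le_sum fun K _ => card_image_le.trans (Nat.card_Ico K m).le)
  exact (card_union_le _ _).trans (add_le_add ((card_union_le _ _).trans (add_le_add hpad hsmall))
    hlarge)

theorem two_mul_subwordComplexity_add_two_le {m : ℕ} (hm : 1 ≤ m) :
    2 * subwordComplexity p2 m + 2 ≤ 4 * m + (m - Nat.log 2 m) * (m - Nat.log 2 m + 1) := by
  have hp := subwordComplexity_le_card p2 m (startSet m) (exists_mem_startSet hm)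
  have hcard := card_startSet_le m
  have hgauss := sum_Ico_sub_mul_two (Nat.log 2 m) m
  have hpow : 2 ^ Nat.log 2 m ≤ m := Nat.pow_log_le_self 2 (by omega)
  have := Nat.one_le_two_pow (n := Nat.log 2 m)
  omega

end P2

/-- Upper bound for the subword complexity of `𝔭₂`:
`p(𝔭₂, m) ≤ (m − log₂ m)(m + log₂ m + 2)/2 + 2m`. -/
theorem complexity_p2_upper_bound (m : ℕ) (hm : 1 ≤ m) :
    (subwordComplexity p2 m : ℝ) ≤
      ((m : ℝ) - Real.logb 2 m) * ((m : ℝ) + Real.logb 2 m + 2) / 2 + 2 * m := by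
  have hnat := P2.two_mul_subwordComplexity_add_two_le hm
  have hfloor : ⌊Real.logb 2 m⌋₊ = Nat.log 2 m := by
    simpa using Real.natFloor_logb_natCast 2 m
  have hlog₁ : Real.logb 2 m < Nat.log 2 m + 1 := hfloor ▸ Nat.lt_floor_add_one _
  have hlog₀ : 0 ≤ Real.logb 2 m := Real.logb_nonneg one_lt_two (by exact_mod_cast hm)
  have hLm : Nat.log 2 m < m := Nat.log_lt_self 2 (by omega)
  set L := Nat.log 2 m
  have hcount : 2 * (subwordComplexity p2 m : ℝ) + 2 ≤ 4 * m + (m - L) * (m - L + 1) := by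
    have := (Nat.cast_le (α := ℝ)).mpr hnat
    push_cast [Nat.cast_sub hLm.le] at this
    linarith
  have hLm' : (L : ℝ) + 1 ≤ m := by exact_mod_cast hLm
  nlinarith [mul_nonneg (by linarith : (0 : ℝ) ≤ m - L - 1) (by positivity : (0 : ℝ) ≤ 2 * L + 1),
    mul_nonneg (by linarith : (0 : ℝ) ≤ L + 1 - Real.logb 2 m)
      (by linarith : (0 : ℝ) ≤ L + 3 + Real.logb 2 m)]
end

section
/- The class 𝒵 of Laurent series of zero topological entropy is a vector space over F(T): let F be a finite field and f, g : LaurentSeries F with zero entropy, i.e. Tendsto (fun m => Real.log (p(f, m)) / m) atTop (𝓝 0) and Tendsto (fun m => Real.log (p(g, m)) / m) atTop (𝓝 0). Then for all rational functions r, s : RatFunc F, the Laurent series (algebraMap (RatFunc F) (LaurentSeries F) r) * f + (algebraMap (RatFunc F) (LaurentSeries F) s) * g also has zero entropy: Tendsto (fun m => Real.log (p(r·f + s·g, m)) / m) atTop (𝓝 0). -/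
/-!
Write `r = P / (X ^ v * Q)` with `Q(0) ≠ 0`. The series `u = X ^ v * r * f` satisfies
`Q * u = P * f`, so each coefficient of `u` is a fixed function of the `deg Q` preceding
coefficients of `u`, the `deg P` preceding coefficients of `f` and the current coefficient
of `f`. A factor of length `m` of `u` is therefore determined by a factor of `f` of the
same length together with one of at most `|F| ^ (deg Q + deg P)` states, and dropping the first `v`
coefficients only loses factors, so `p(r f, m) ≤ C * p(f, m)`. Since a factor of `u + w`
is determined by the factors of `u` and `w` at the same position,
`p(r f + s g, m) ≤ C * D * p(f, m) * p(g, m)`, which has subexponential growth.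
-/

open Filter Topology
open scoped RatFunc

/-- The complexity of a Laurent series `f ∈ F((T⁻¹))`: the subword complexity of its
coefficient sequence. -/
noncomputable def laurentComplexity {F : Type*} [Field F] (f : LaurentSeries F) (m : ℕ) : ℕ :=
  subwordComplexity (fun n : ℕ => f.coeff (n : ℤ)) m

open Set Function

theorem Function.FactorsThrough.ncard_range_le {ι α β : Type*} {φ : ι → α} {ψ : ι → β}
    (h : φ.FactorsThrough ψ) (hψ : (range ψ).Finite) : (range φ).ncard ≤ (range ψ).ncard := by
  rcases isEmpty_or_nonempty ι with hι | ⟨⟨i⟩⟩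
  · simp [range_eq_empty]
  · have hφ : extend ψ φ (fun _ => φ i) ∘ ψ = φ := funext (h.extend_apply _)
    rw [← hφ, range_comp]
    exact ncard_image_le hψ

section Sequences

variable {A B C : Type*}

theorem subwordComplexity_eq_ncard_range (a : ℕ → A) (m : ℕ) :
    subwordComplexity a m = (range fun (j : ℕ) (i : Fin m) => a (j + i)).ncard := by
  simp only [subwordComplexity, range, funext_iff, eq_comm]

theorem subwordComplexity_pos [Finite A] (a : ℕ → A) (m : ℕ) : 0 < subwordComplexity a m := by
  rw [subwordComplexity_eq_ncard_range]
  exact (ncard_pos (toFinite _)).2 (range_nonempty _)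

theorem subwordComplexity_map₂_le [Finite A] [Finite B] (op : A → B → C) (a : ℕ → A)
    (b : ℕ → B) (m : ℕ) :
    subwordComplexity (fun n => op (a n) (b n)) m ≤
      subwordComplexity a m * subwordComplexity b m := by
  simp only [subwordComplexity_eq_ncard_range, ← ncard_prod]
  refine (FactorsThrough.ncard_range_le (ψ := fun (j : ℕ) =>
    ((fun i : Fin m => a (j + i)), (fun i : Fin m => b (j + i)))) ?_ (toFinite _)).trans ?_
  · intro j j' h
    simp only [Prod.mk.injEq, funext_iff] at h
    funext i
    exact congrArg₂ op (h.1 i) (h.2 i)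
  · exact ncard_le_ncard (by rintro _ ⟨j, rfl⟩; exact ⟨⟨j, rfl⟩, ⟨j, rfl⟩⟩) (toFinite _)

theorem subwordComplexity_comp_add_le [Finite A] (a : ℕ → A) (k m : ℕ) :
    subwordComplexity (fun n => a (n + k)) m ≤ subwordComplexity a m := by
  simp only [subwordComplexity_eq_ncard_range]
  refine ncard_le_ncard ?_ (toFinite _)
  rintro _ ⟨j, rfl⟩
  exact ⟨j + k, funext fun i => by simp only [add_right_comm]⟩

def pastBlock (x : ℤ → A) (d : ℕ) (n : ℤ) : Fin d → A := fun k => x (n - (k + 1))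

theorem pastBlock_add_eq {x : ℤ → A} {d : ℕ} {j j' : ℤ}
    (hx : pastBlock x d j = pastBlock x d j') {i : ℕ} (h : ∀ l < i, x (j + l) = x (j' + l)) :
    pastBlock x d (j + i) = pastBlock x d (j' + i) := by
  funext k
  simp only [pastBlock]
  by_cases hk : (k : ℕ) < i
  · convert h (i - (k + 1)) (by omega) using 2 <;> omega
  · have := congrFun hx ⟨k - i, by omega⟩
    simp only [pastBlock] at this
    convert this using 2 <;> omega

theorem eq_of_pastBlock_eq_of_recurrence {x : ℤ → A} {y : ℤ → B} {d e : ℕ}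
    (G : (Fin d → A) → (Fin e → B) → B → A)
    (hx : ∀ n, x n = G (pastBlock x d n) (pastBlock y e n) (y n)) {j j' : ℤ}
    (hxj : pastBlock x d j = pastBlock x d j') (hyj : pastBlock y e j = pastBlock y e j')
    {m : ℕ} (hy : ∀ i < m, y (j + i) = y (j' + i)) : ∀ i < m, x (j + i) = x (j' + i) := by
  intro i
  induction i using Nat.strong_induction_on with
  | _ i ih =>
    intro hi
    rw [hx, hx (j' + i), pastBlock_add_eq hxj fun l hl => ih l hl (by omega),
      pastBlock_add_eq hyj fun l hl => hy l (by omega), hy i hi]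

theorem subwordComplexity_le_of_recurrence [Finite A] [Finite B] {x : ℤ → A} {y : ℤ → B}
    {d e : ℕ} (G : (Fin d → A) → (Fin e → B) → B → A)
    (hx : ∀ n, x n = G (pastBlock x d n) (pastBlock y e n) (y n)) (m : ℕ) :
    subwordComplexity (fun n : ℕ => x n) m ≤
      Nat.card A ^ d * Nat.card B ^ e * subwordComplexity (fun n : ℕ => y n) m := by
  simp only [subwordComplexity_eq_ncard_range]
  set ψ := fun j : ℕ => (pastBlock x d j, pastBlock y e j, fun i : Fin m => y ↑(j + ↑i))
  have hψ : (fun (j : ℕ) (i : Fin m) => x ↑(j + ↑i)).FactorsThrough ψ := by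
    intro j j' h
    simp only [ψ, Prod.mk.injEq, funext_iff] at h
    obtain ⟨hxj, hyj, hy⟩ := h
    funext i
    exact_mod_cast eq_of_pastBlock_eq_of_recurrence G hx (funext hxj) (funext hyj)
      (fun l hl => by exact_mod_cast hy ⟨l, hl⟩) i i.2
  calc _ ≤ (range ψ).ncard := hψ.ncard_range_le (toFinite _)
    _ ≤ (univ ×ˢ univ ×ˢ range fun (j : ℕ) (i : Fin m) => y ↑(j + ↑i)).ncard :=
      ncard_le_ncard (by rintro _ ⟨j, rfl⟩; exact ⟨trivial, trivial, j, rfl⟩) (toFinite _)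
    _ = _ := by simp only [ncard_prod, ncard_univ, Nat.card_fun, Nat.card_fin, mul_assoc]

end Sequences

open Polynomial

section Laurent

variable {F : Type*} [Field F]

theorem laurentComplexity_add_le [Finite F] (f g : LaurentSeries F) (m : ℕ) :
    laurentComplexity (f + g) m ≤ laurentComplexity f m * laurentComplexity g m :=
  subwordComplexity_map₂_le (· + ·) (fun n : ℕ => f.coeff n) (fun n : ℕ => g.coeff n) m

theorem LaurentSeries.coeff_algebraMap_polynomial_mul (P : F[X]) (x : LaurentSeries F) (n : ℤ) :
    (algebraMap F[X] (LaurentSeries F) P * x).coeff n =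
      ∑ k ∈ Finset.range (P.natDegree + 1), P.coeff k * x.coeff (n - k) := by
  conv_lhs => rw [P.as_sum_range_C_mul_X_pow]
  simp [Finset.sum_mul, HahnSeries.coeff_sum, HahnSeries.coeff_single_mul]

theorem laurentComplexity_le_of_mul_eq_mul [Finite F] {P Q : F[X]} (hQ : Q.coeff 0 ≠ 0)
    {x y : LaurentSeries F}
    (h : algebraMap F[X] (LaurentSeries F) Q * x = algebraMap F[X] (LaurentSeries F) P * y)
    (m : ℕ) :
    laurentComplexity x m ≤ Nat.card F ^ (Q.natDegree + P.natDegree) * laurentComplexity y m := by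
  let G (s : Fin Q.natDegree → F) (t : Fin P.natDegree → F) (c : F) : F :=
    (Q.coeff 0)⁻¹ *
      (P.coeff 0 * c + ∑ k : Fin _, P.coeff (k + 1) * t k - ∑ k : Fin _, Q.coeff (k + 1) * s k)
  have hrec (n : ℤ) : x.coeff n =
      G (pastBlock x.coeff _ n) (pastBlock y.coeff _ n) (y.coeff n) := by
    have hn := congrArg (HahnSeries.coeff · n) h
    simp only [LaurentSeries.coeff_algebraMap_polynomial_mul, Finset.sum_range_succ',
      ← Fin.sum_univ_eq_sum_range, Nat.cast_zero, sub_zero] at hn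
    rw [eq_inv_mul_iff_mul_eq₀ hQ]
    simp only [pastBlock]
    push_cast at hn
    linear_combination hn
  rw [pow_add]
  exact subwordComplexity_le_of_recurrence G hrec m

theorem laurentComplexity_le_X_pow_mul [Finite F] (v : ℕ) (x : LaurentSeries F) (m : ℕ) :
    laurentComplexity x m ≤
      laurentComplexity (algebraMap F[X] (LaurentSeries F) (X ^ v) * x) m := by
  set y := algebraMap F[X] (LaurentSeries F) (X ^ v) * x
  have hshift (n : ℕ) : x.coeff n = y.coeff ((n + v : ℕ) : ℤ) := by
    simp [y, HahnSeries.coeff_single_mul]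
  simpa only [laurentComplexity, hshift] using
    subwordComplexity_comp_add_le (fun n : ℕ => y.coeff n) v m

theorem RatFunc.exists_X_pow_mul_mul_eq (r : RatFunc F) : ∃ (P Q : F[X]) (v : ℕ),
    Q.coeff 0 ≠ 0 ∧
      algebraMap F[X] (RatFunc F) (Polynomial.X ^ v * Q) * r = algebraMap F[X] (RatFunc F) P := by
  obtain ⟨Q, hQ⟩ : Polynomial.X ^ r.denom.natTrailingDegree ∣ r.denom :=
    X_pow_dvd_iff.2 fun _ => coeff_eq_zero_of_lt_natTrailingDegree
  refine ⟨r.num, Q, r.denom.natTrailingDegree, ?_, ?_⟩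
  · have hcoeff := coeff_X_pow_mul Q r.denom.natTrailingDegree 0
    rw [← hQ, zero_add] at hcoeff
    rw [← hcoeff]
    exact trailingCoeff_nonzero_iff_nonzero.2 r.denom_ne_zero
  · have hr := RatFunc.num_div_denom r
    rw [div_eq_iff (RatFunc.algebraMap_ne_zero r.denom_ne_zero)] at hr
    rw [← hQ, hr, mul_comm]

theorem exists_laurentComplexity_algebraMap_mul_le [Finite F] (r : RatFunc F)
    (f : LaurentSeries F) : ∃ C, ∀ m,
      laurentComplexity (algebraMap (RatFunc F) (LaurentSeries F) r * f) m ≤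
        C * laurentComplexity f m := by
  obtain ⟨P, Q, v, hQ, hr⟩ := r.exists_X_pow_mul_mul_eq
  set u := algebraMap (RatFunc F) (LaurentSeries F) r * f
  have key : algebraMap F[X] (LaurentSeries F) Q * (algebraMap F[X] (LaurentSeries F) (X ^ v) * u)
      = algebraMap F[X] (LaurentSeries F) P * f := by
    simp only [u, IsScalarTower.algebraMap_apply F[X] (RatFunc F) (LaurentSeries F), ← hr,
      map_mul]
    ring
  exact ⟨_, fun m => (laurentComplexity_le_X_pow_mul v u m).trans
    (laurentComplexity_le_of_mul_eq_mul hQ key m)⟩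

end Laurent

theorem tendsto_log_div_nhds_zero_of_le_mul {p q₁ q₂ : ℕ → ℕ} (C : ℕ) (hp : ∀ m, 0 < p m)
    (hle : ∀ m, p m ≤ C * (q₁ m * q₂ m))
    (h₁ : Tendsto (fun m : ℕ => Real.log (q₁ m) / m) atTop (𝓝 0))
    (h₂ : Tendsto (fun m : ℕ => Real.log (q₂ m) / m) atTop (𝓝 0)) :
    Tendsto (fun m : ℕ => Real.log (p m) / m) atTop (𝓝 0) := by
  have hbound : Tendsto (fun m : ℕ => (Real.log C + (Real.log (q₁ m) + Real.log (q₂ m))) / m)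
      atTop (𝓝 0) := by
    simpa [add_div] using (tendsto_const_div_atTop_nhds_zero_nat (Real.log C)).add (h₁.add h₂)
  refine tendsto_of_tendsto_of_tendsto_of_le_of_le tendsto_const_nhds hbound
    (fun m => div_nonneg (Real.log_natCast_nonneg _) m.cast_nonneg) fun m => ?_
  have hne : C ≠ 0 ∧ q₁ m ≠ 0 ∧ q₂ m ≠ 0 := by
    simpa [Nat.pos_iff_ne_zero] using (hp m).trans_le (hle m)
  gcongr
  calc Real.log (p m) ≤ Real.log (C * (q₁ m * q₂ m) : ℕ) :=
        Real.log_le_log (by exact_mod_cast hp m) (by exact_mod_cast hle m)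
    _ = _ := by
      push_cast
      rw [Real.log_mul, Real.log_mul] <;> simp [hne]

/-- The class 𝒵 of Laurent series of zero topological entropy is a vector space
over `F(T)`: any `F(T)`-linear combination of two Laurent series of zero entropy
again has zero entropy. -/
theorem zero_entropy_class_vector_space
    (F : Type*) [Field F] [Fintype F] (f g : LaurentSeries F)
    (hf : Tendsto (fun m : ℕ => Real.log (laurentComplexity f m) / m) atTop (𝓝 0))
    (hg : Tendsto (fun m : ℕ => Real.log (laurentComplexity g m) / m) atTop (𝓝 0))
    (r s : RatFunc F) :
    Tendsto (fun m : ℕ =>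
      Real.log (laurentComplexity
        ((algebraMap (RatFunc F) (LaurentSeries F) r) * f +
          (algebraMap (RatFunc F) (LaurentSeries F) s) * g) m) / m) atTop (𝓝 0) := by
  obtain ⟨C, hC⟩ := exists_laurentComplexity_algebraMap_mul_le r f
  obtain ⟨D, hD⟩ := exists_laurentComplexity_algebraMap_mul_le s g
  refine tendsto_log_div_nhds_zero_of_le_mul (C * D) (fun m => subwordComplexity_pos (A := F) _ m)
    (fun m => ?_) hf hg
  calc _ ≤ _ := laurentComplexity_add_le _ _ m
    _ ≤ C * laurentComplexity f m * (D * laurentComplexity g m) := Nat.mul_le_mul (hC m) (hD m)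
    _ = C * D * (laurentComplexity f m * laurentComplexity g m) := by ring
end

section
/- Let d, e ≥ 2 be multiplicatively independent integers, i.e. for all k, l : ℕ, d^k = e^l implies k = 0 and l = 0. Let F be a finite field (of characteristic p) and let a : ℕ → F be the sequence defined by a n = (the number of pairs (k, l) ∈ ℕ × ℕ with d^k + e^l = n), cast into F (this is the coefficient sequence of the product f·g of the Laurent series f = ∑_{n≥0} T^{−d^n} and g = ∑_{n≥0} T^{−e^n} in F((T⁻¹))). Then there exists a real constant C > 0 such that p(a, m) ≤ C · m⁴ for all m ≥ 1. -/
/-!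
Split the representations `n = d ^ k + e ^ l` into those with `d ^ k ≤ e ^ l` and those with
`e ^ l < d ^ k`. Look at a factor of length `m` starting at `j ≥ 3m`. A representation of the
first kind has `2 e ^ l ≥ j`, so only two consecutive exponents `l` occur, and each of them
contributes the indicator of `{i | j + i - e ^ l is a power of d}`. This indicator takes at most
`3m + 1` values: if `e ^ l + m ≤ j`, consecutive powers of `d` near `j - e ^ l` are more than `m`
apart, so at most one `i` is hit; otherwise it depends only on `j + m - e ^ l < 2m`. Hence the
factors of the sequence lie, up to `3m` exceptions, in a set of size `(3m + 1) ^ 4`.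
-/

open scoped Pointwise

theorem Set.ncard_add_le {M : Type*} [Add M] [IsCancelAdd M] (s t : Set M) :
    (s + t).ncard ≤ s.ncard * t.ncard := by
  simpa only [Nat.card_coe_set_eq] using Set.natCard_add_le

section

open scoped Classical

variable {A : Type*} {d e u v m j : ℕ} {r : ℕ → ℕ → Prop}

def factorAt (a : ℕ → A) (m j : ℕ) : Fin m → A := fun i => a (j + i)

theorem subwordComplexity_le_of_factorAt_mem {a : ℕ → A} {N : ℕ} {W : Set (Fin m → A)}
    (hW : W.Finite) (h : ∀ j, N ≤ j → factorAt a m j ∈ W) :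
    subwordComplexity a m ≤ N + W.ncard := by
  have hsub : {w : Fin m → A | ∃ j : ℕ, ∀ i : Fin m, w i = a (j + i)} ⊆
      factorAt a m '' ↑(Finset.range N) ∪ W := by
    rintro w ⟨j, hw⟩
    have hwj : factorAt a m j = w := funext fun i => (hw i).symm
    rcases lt_or_ge j N with hj | hj
    · exact Or.inl ⟨j, Finset.mem_coe.2 (Finset.mem_range.2 hj), hwj⟩
    · exact Or.inr (hwj ▸ h j hj)
  calc subwordComplexity a m ≤ (factorAt a m '' ↑(Finset.range N) ∪ W).ncard :=
        Set.ncard_le_ncard hsub ((Set.toFinite _).union hW)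
    _ ≤ (factorAt a m '' ↑(Finset.range N)).ncard + W.ncard := Set.ncard_union_le _ _
    _ ≤ N + W.ncard := by
        gcongr
        exact (Set.ncard_image_le (Set.toFinite _)).trans (by simp)

-- `pulse m (Fin.last m)` is the zero word.
def pulse (m : ℕ) (i₀ : Fin (m + 1)) : Fin m → ℕ := fun i => if (i : ℕ) = i₀ then 1 else 0

theorem exists_pulse_eq_indicator (P : Fin m → Prop) [DecidablePred P]
    (hP : ∀ i i', P i → P i' → i = i') :
    ∃ i₀, pulse m i₀ = fun i => if P i then 1 else 0 := by
  by_cases h : ∃ i, P i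
  · obtain ⟨i₀, hi₀⟩ := h
    refine ⟨i₀.castSucc, funext fun i => ?_⟩
    by_cases hi : P i
    · obtain rfl := hP i i₀ hi hi₀
      simp [pulse, hi]
    · have : (i : ℕ) ≠ i₀ := fun h' => hi (Fin.ext h' ▸ hi₀)
      simp [pulse, hi, this]
  · simp only [not_exists] at h
    refine ⟨Fin.last m, funext fun i => ?_⟩
    simp [pulse, h i, i.isLt.ne]

theorem two_mul_pow_le_pow {k k' : ℕ} (hu : 2 ≤ u) (h : k < k') : 2 * u ^ k ≤ u ^ k' :=
  calc 2 * u ^ k ≤ u * u ^ k := Nat.mul_le_mul_right _ hu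
    _ = u ^ (k + 1) := by ring
    _ ≤ u ^ k' := Nat.pow_le_pow_right (by omega) h

theorem pow_eq_pow_of_mem_Ico {k k' a : ℕ} (hu : 2 ≤ u) (hm : m ≤ a)
    (hk : u ^ k ∈ Set.Ico a (a + m)) (hk' : u ^ k' ∈ Set.Ico a (a + m)) : u ^ k = u ^ k' := by
  simp only [Set.mem_Ico] at hk hk'
  rcases lt_trichotomy k k' with h | rfl | h
  · have := two_mul_pow_le_pow hu h
    omega
  · rfl
  · have := two_mul_pow_le_pow hu h
    omega

noncomputable def reprIndicator (u : ℕ) (r : ℕ → ℕ → Prop) (y n : ℕ) : ℕ :=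
  if ∃ k, u ^ k + y = n ∧ r (u ^ k) y then 1 else 0

-- The factor at `j` of `reprIndicator u r y` when `j < y + m`, with `t = j + m - y`.
noncomputable def shiftedPowIndicator (u m : ℕ) (t : Fin (2 * m)) : Fin m → ℕ :=
  fun i => if ∃ k, u ^ k + m = t + i then 1 else 0

def singleFactors (u m : ℕ) : Set (Fin m → ℕ) :=
  Set.range (Sum.elim (pulse m) (shiftedPowIndicator u m))

theorem ncard_singleFactors_le : (singleFactors u m).ncard ≤ 3 * m + 1 := by
  rw [singleFactors, ← Set.image_univ]
  refine (Set.ncard_image_le (Set.toFinite _)).trans ?_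
  rw [Set.ncard_univ, Nat.card_sum, Nat.card_fin, Nat.card_fin]
  omega

theorem factorAt_reprIndicator_mem (hu : 2 ≤ u) (hr : ∀ x y, x < y → r x y) (hm : 0 < m)
    (hj : 3 * m ≤ j) (y : ℕ) : factorAt (reprIndicator u r y) m j ∈ singleFactors u m := by
  by_cases hfar : y + m ≤ j
  · obtain ⟨i₀, h⟩ := exists_pulse_eq_indicator
      (fun i : Fin m => ∃ k, u ^ k + y = j + i ∧ r (u ^ k) y) fun i i' ⟨k, hk, _⟩ ⟨k', hk', _⟩ => by
        have := i.isLt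
        have := i'.isLt
        have := pow_eq_pow_of_mem_Ico (k := k) (k' := k') (a := j - y) (m := m) hu (by omega)
          (Set.mem_Ico.2 ⟨by omega, by omega⟩) (Set.mem_Ico.2 ⟨by omega, by omega⟩)
        exact Fin.ext (by omega)
    exact ⟨.inl i₀, h⟩
  · refine ⟨.inr ⟨j + m - y, by omega⟩, funext fun i => if_congr (exists_congr fun k => ?_) rfl rfl⟩
    have := Nat.one_le_pow k u (by omega)
    have := i.isLt
    dsimp only
    constructor
    · intro h
      exact ⟨by omega, hr _ _ (by omega)⟩
    · rintro ⟨h, -⟩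
      omega

noncomputable def reprCount (u v : ℕ) (r : ℕ → ℕ → Prop) (n : ℕ) : ℕ :=
  {p : ℕ × ℕ | u ^ p.1 + v ^ p.2 = n ∧ r (u ^ p.1) (v ^ p.2)}.ncard

theorem reprCount_eq_ncard_exponents (hu : 2 ≤ u) (v : ℕ) (r : ℕ → ℕ → Prop) (n : ℕ) :
    reprCount u v r n = {l | ∃ k, u ^ k + v ^ l = n ∧ r (u ^ k) (v ^ l)}.ncard := by
  rw [reprCount, ← Set.InjOn.ncard_image (f := Prod.snd)]
  · congr 1
    ext l
    simp
  · rintro ⟨k, l⟩ hkl ⟨k', l'⟩ hkl' (rfl : l = l')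
    have : u ^ k = u ^ k' := by
      simp only [Set.mem_ofPred_eq] at hkl hkl'
      omega
    rw [Nat.pow_right_injective hu this]

theorem reprCount_eq_add_reprIndicator (hu : 2 ≤ u) (hv : 2 ≤ v) (hr : ∀ x y, r x y → x ≤ y)
    (hj : 3 * m ≤ j) : ∃ y₁ y₂, ∀ i : Fin m,
      reprCount u v r (j + i) = reprIndicator u r y₁ (j + i) + reprIndicator u r y₂ (j + i) := by
  have hex : ∃ l, j ≤ 2 * v ^ l := ⟨j, by have := Nat.lt_pow_self (n := j) (by omega : 1 < v); omega⟩
  obtain ⟨l₀, hl₀, hmin⟩ : ∃ l₀, j ≤ 2 * v ^ l₀ ∧ ∀ l, j ≤ 2 * v ^ l → l₀ ≤ l :=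
    ⟨Nat.find hex, Nat.find_spec hex, fun l h => Nat.find_min' hex h⟩
  refine ⟨v ^ l₀, v ^ (l₀ + 1), fun i => ?_⟩
  -- a representation with `u ^ k ≤ v ^ l` has `j ≤ 2 v ^ l < 4 j`
  have hl : ∀ l k, u ^ k + v ^ l = j + i → r (u ^ k) (v ^ l) → l = l₀ ∨ l = l₀ + 1 := by
    intro l k hkl hrkl
    have := hr _ _ hrkl
    have hle : l₀ ≤ l := hmin l (by omega)
    by_contra hne
    have := two_mul_pow_le_pow hv (show l₀ < l₀ + 1 by omega)
    have := two_mul_pow_le_pow hv (show l₀ + 1 < l by omega)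
    have := Nat.one_le_pow k u (by omega)
    have := i.isLt
    omega
  have hE : {l | ∃ k, u ^ k + v ^ l = j + i ∧ r (u ^ k) (v ^ l)} =
      ↑(({l₀, l₀ + 1} : Finset ℕ).filter fun l => ∃ k, u ^ k + v ^ l = j + i ∧ r (u ^ k) (v ^ l)) := by
    ext l
    simp only [Finset.coe_filter, Finset.mem_insert, Finset.mem_singleton, Set.mem_ofPred_eq]
    constructor
    · rintro ⟨k, hk⟩
      exact ⟨hl l k hk.1 hk.2, k, hk⟩
    · exact fun h => h.2
  rw [reprCount_eq_ncard_exponents hu, hE, Set.ncard_coe_finset, Finset.card_filter,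
    Finset.sum_pair (by omega)]
  rfl

theorem factorAt_reprCount_mem (hu : 2 ≤ u) (hv : 2 ≤ v) (hr : ∀ x y, x < y → r x y)
    (hr' : ∀ x y, r x y → x ≤ y) (hm : 0 < m) (hj : 3 * m ≤ j) :
    factorAt (reprCount u v r) m j ∈ singleFactors u m + singleFactors u m := by
  obtain ⟨y₁, y₂, h⟩ := reprCount_eq_add_reprIndicator hu hv hr' hj
  rw [show factorAt (reprCount u v r) m j =
      factorAt (reprIndicator u r y₁) m j + factorAt (reprIndicator u r y₂) m j from funext h]
  exact Set.add_mem_add (factorAt_reprIndicator_mem hu hr hm hj y₁)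
    (factorAt_reprIndicator_mem hu hr hm hj y₂)

theorem ncard_pow_add_pow_eq (hd : 2 ≤ d) (he : 2 ≤ e) (n : ℕ) :
    {p : ℕ × ℕ | d ^ p.1 + e ^ p.2 = n}.ncard =
      reprCount d e (· ≤ ·) n + reprCount e d (· < ·) n := by
  have hfin : {p : ℕ × ℕ | d ^ p.1 + e ^ p.2 = n}.Finite := by
    refine ((Set.finite_Iic n).prod (Set.finite_Iic n)).subset fun p hp => ?_
    have := Nat.lt_pow_self (n := p.1) (by omega : 1 < d)
    have := Nat.lt_pow_self (n := p.2) (by omega : 1 < e)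
    simp only [Set.mem_ofPred_eq] at hp
    simp only [Set.mem_prod, Set.mem_Iic]
    omega
  have hsplit : {p : ℕ × ℕ | d ^ p.1 + e ^ p.2 = n} =
      {p | d ^ p.1 + e ^ p.2 = n ∧ d ^ p.1 ≤ e ^ p.2} ∪
        Prod.swap '' {p | e ^ p.1 + d ^ p.2 = n ∧ e ^ p.1 < d ^ p.2} := by
    rw [Set.image_swap_eq_preimage_swap]
    ext ⟨k, l⟩
    simp only [Set.mem_union, Set.mem_preimage, Prod.swap_prod_mk, Set.mem_ofPred_eq]
    omega
  rw [hsplit] at hfin ⊢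
  rw [Set.ncard_union_eq ?_ (hfin.subset Set.subset_union_left) (hfin.subset Set.subset_union_right),
    Set.ncard_image_of_injective _ Prod.swap_injective]
  · rfl
  · rw [Set.image_swap_eq_preimage_swap, Set.disjoint_left]
    rintro ⟨k, l⟩ h h'
    simp only [Set.mem_preimage, Prod.swap_prod_mk, Set.mem_ofPred_eq] at h h'
    omega

end

def sumFactors (d e m : ℕ) : Set (Fin m → ℕ) :=
  (singleFactors d m + singleFactors d m) + (singleFactors e m + singleFactors e m)

theorem sumFactors_finite (d e m : ℕ) : (sumFactors d e m).Finite :=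
  ((Set.finite_range _).add (Set.finite_range _)).add ((Set.finite_range _).add (Set.finite_range _))

theorem ncard_sumFactors_le (d e m : ℕ) : (sumFactors d e m).ncard ≤ (3 * m + 1) ^ 4 :=
  calc (sumFactors d e m).ncard
      ≤ ((singleFactors d m).ncard * (singleFactors d m).ncard) *
          ((singleFactors e m).ncard * (singleFactors e m).ncard) :=
        (Set.ncard_add_le _ _).trans (Nat.mul_le_mul (Set.ncard_add_le _ _) (Set.ncard_add_le _ _))
    _ ≤ ((3 * m + 1) * (3 * m + 1)) * ((3 * m + 1) * (3 * m + 1)) := by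
        gcongr <;> exact ncard_singleFactors_le
    _ = (3 * m + 1) ^ 4 := by ring

theorem factorAt_ncard_pow_add_pow_mem (hd : 2 ≤ d) (he : 2 ≤ e) (hm : 0 < m) (hj : 3 * m ≤ j) :
    factorAt (fun n => {p : ℕ × ℕ | d ^ p.1 + e ^ p.2 = n}.ncard) m j ∈ sumFactors d e m := by
  have hsplit : factorAt (fun n => {p : ℕ × ℕ | d ^ p.1 + e ^ p.2 = n}.ncard) m j =
      factorAt (reprCount d e (· ≤ ·)) m j + factorAt (reprCount e d (· < ·)) m j :=
    funext fun i => ncard_pow_add_pow_eq hd he (j + i)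
  rw [hsplit]
  exact Set.add_mem_add
    (factorAt_reprCount_mem hd he (fun _ _ => le_of_lt) (fun _ _ => id) hm hj)
    (factorAt_reprCount_mem he hd (fun _ _ => id) (fun _ _ => le_of_lt) hm hj)

theorem complexity_product_lacunary_series_general
    (d e : ℕ) (hd : 2 ≤ d) (he : 2 ≤ e)
    (F : Type*) [Field F] (a : ℕ → F)
    (ha : ∀ n : ℕ, a n = ((Set.ncard {p : ℕ × ℕ | d ^ p.1 + e ^ p.2 = n} : ℕ) : F)) :
    ∃ C : ℝ, 0 < C ∧ ∀ m : ℕ, 1 ≤ m →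
      (subwordComplexity a m : ℝ) ≤ C * (m : ℝ) ^ 4 := by
  refine ⟨259, by norm_num, fun m hm => ?_⟩
  have hcount : subwordComplexity a m ≤ 3 * m + (3 * m + 1) ^ 4 := by
    refine (subwordComplexity_le_of_factorAt_mem (N := 3 * m)
      ((sumFactors_finite d e m).image fun w i => (w i : F)) fun j hj => ?_).trans ?_
    · exact ⟨_, factorAt_ncard_pow_add_pow_mem hd he hm hj, funext fun i => (ha _).symm⟩
    · gcongr
      exact (Set.ncard_image_le (sumFactors_finite d e m)).trans (ncard_sumFactors_le d e m)
  have hm4 : 3 * m + (3 * m + 1) ^ 4 ≤ 259 * m ^ 4 := by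
    have : (3 * m + 1) ^ 4 ≤ (4 * m) ^ 4 := Nat.pow_le_pow_left (by omega) 4
    have : m ≤ m ^ 4 := Nat.le_self_pow (by norm_num) m
    nlinarith
  exact_mod_cast hcount.trans hm4

/-- Let `d, e ≥ 2` be multiplicatively independent integers and `F` a finite field.
The coefficient sequence of the product `(∑ T^{−d^n})·(∑ T^{−e^n})`, namely
`a n = #{(k, l) : d^k + e^l = n} mod p`, has complexity `O(m⁴)`. -/
theorem complexity_product_lacunary_series
    (d e : ℕ) (hd : 2 ≤ d) (he : 2 ≤ e)
    (hind : ∀ k l : ℕ, d ^ k = e ^ l → k = 0 ∧ l = 0)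
    (F : Type*) [Field F] [Fintype F] (a : ℕ → F)
    (ha : ∀ n : ℕ, a n = ((Set.ncard {p : ℕ × ℕ | d ^ p.1 + e ^ p.2 = n} : ℕ) : F)) :
    ∃ C : ℝ, 0 < C ∧ ∀ m : ℕ, 1 ≤ m →
      (subwordComplexity a m : ℝ) ≤ C * (m : ℝ) ^ 4 :=
  complexity_product_lacunary_series_general d e hd he F a ha
end

section
/- Let F be a finite field with q elements (q = Fintype.card F), let a : ℕ → F, and let r be an integer with 0 ≤ r < q. Then the image of a under the Cartier operator Λ_r, namely the sequence n ↦ a (q·n + r), satisfies p(fun n => a (q·n + r), m) ≤ q · (p(a, m))^q for every integer m ≥ 1. -/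
/-!
A factor of length `m` of `n ↦ a (q n + r)` starting at `j` is read off, at the positions
`q i + r`, from the factor of length `q m` of `a` starting at `q j`; hence its complexity is at
most `p(a, q m)`. A factor of length `q m` is the concatenation of `q` factors of length `m`,
so `p(a, q m) ≤ p(a, m) ^ q`.
-/

open Set

section

variable {A : Type*}

def factors (a : ℕ → A) (m : ℕ) : Set (Fin m → A) :=
  { w | ∃ j : ℕ, ∀ i : Fin m, w i = a (j + i) }

theorem subwordComplexity_eq_ncard_factors (a : ℕ → A) (m : ℕ) :
    subwordComplexity a m = (factors a m).ncard :=
  rfl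

theorem subwordComplexity_zero (a : ℕ → A) : subwordComplexity a 0 = 1 := by
  have : factors a 0 = univ := eq_univ_of_forall fun _ => ⟨0, fun i => i.elim0⟩
  rw [subwordComplexity_eq_ncard_factors, this, ncard_univ, Nat.card_unique]

theorem subwordComplexity_le_of_subset_image [Finite A] {B : Type*} {a : ℕ → A} {b : ℕ → B}
    {k m : ℕ} (g : (Fin k → A) → Fin m → B) (h : factors b m ⊆ g '' factors a k) :
    subwordComplexity b m ≤ subwordComplexity a k :=
  (ncard_le_ncard h ((toFinite _).image g)).trans (ncard_image_le (toFinite _))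

theorem factors_add_subset_append (a : ℕ → A) (k l : ℕ) :
    factors a (k + l) ⊆
      (fun p => Fin.append p.1 p.2) '' (factors a k ×ˢ factors a l) := by
  rintro w ⟨j, hj⟩
  refine ⟨(fun i => w (Fin.castAdd l i), fun i => w (Fin.natAdd k i)),
    ⟨⟨j, fun i => by simpa using hj (Fin.castAdd l i)⟩,
      ⟨j + k, fun i => by simpa [Nat.add_assoc] using hj (Fin.natAdd k i)⟩⟩, ?_⟩
  exact Fin.append_castAdd_natAdd

theorem subwordComplexity_add_le [Finite A] (a : ℕ → A) (k l : ℕ) :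
    subwordComplexity a (k + l) ≤ subwordComplexity a k * subwordComplexity a l := by
  rw [subwordComplexity_eq_ncard_factors, subwordComplexity_eq_ncard_factors,
    subwordComplexity_eq_ncard_factors, ← ncard_prod]
  exact (ncard_le_ncard (factors_add_subset_append a k l) ((toFinite _).image _)).trans
    (ncard_image_le (toFinite _))

theorem subwordComplexity_mul_le_pow [Finite A] (a : ℕ → A) (n m : ℕ) :
    subwordComplexity a (n * m) ≤ subwordComplexity a m ^ n := by
  induction n with
  | zero => simp [subwordComplexity_zero]
  | succ n ih =>
    calc subwordComplexity a ((n + 1) * m)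
        ≤ subwordComplexity a (n * m) * subwordComplexity a m := by
          simpa [Nat.succ_mul] using subwordComplexity_add_le a (n * m) m
      _ ≤ subwordComplexity a m ^ n * subwordComplexity a m := Nat.mul_le_mul_right _ ih
      _ = subwordComplexity a m ^ (n + 1) := (pow_succ _ _).symm

theorem subwordComplexity_decimate_le [Finite A] (a : ℕ → A) {q r : ℕ} (hr : r < q) (m : ℕ) :
    subwordComplexity (fun n => a (q * n + r)) m ≤ subwordComplexity a (q * m) := by
  have hlt (i : Fin m) : q * i + r < q * m :=
    calc q * i + r < q * (i + 1) := by rw [mul_add_one]; omega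
      _ ≤ q * m := Nat.mul_le_mul_left _ i.isLt
  refine subwordComplexity_le_of_subset_image (fun v i => v ⟨q * i + r, hlt i⟩) ?_
  rintro w ⟨j, hj⟩
  refine ⟨fun i => a (q * j + i), ⟨q * j, fun _ => rfl⟩, funext fun i => ?_⟩
  simp only [hj i, mul_add, add_assoc]

end

theorem complexity_cartier_operator_general
    (F : Type*) [Fintype F] (a : ℕ → F) (r : ℕ)
    (hr : r < Fintype.card F) (m : ℕ) :
    subwordComplexity (fun n => a (Fintype.card F * n + r)) m ≤
      Fintype.card F * (subwordComplexity a m) ^ (Fintype.card F) :=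
  calc _ ≤ subwordComplexity a (Fintype.card F * m) := subwordComplexity_decimate_le a hr m
    _ ≤ subwordComplexity a m ^ Fintype.card F := subwordComplexity_mul_le_pow a _ m
    _ ≤ _ := Nat.le_mul_of_pos_left _ (Nat.zero_lt_of_lt hr)

/-- The Cartier operator `Λ_r`, sending a coefficient sequence `a` to
`n ↦ a (q·n + r)` (with `q` the cardinality of the field and `0 ≤ r < q`),
satisfies `p(Λ_r(f), m) ≤ q · p(f, m)^q`. -/
theorem complexity_cartier_operator
    (F : Type*) [Field F] [Fintype F] (a : ℕ → F) (r : ℕ)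
    (hr : r < Fintype.card F) (m : ℕ) (hm : 1 ≤ m) :
    subwordComplexity (fun n => a (Fintype.card F * n + r)) m ≤
      Fintype.card F * (subwordComplexity a m) ^ (Fintype.card F) :=
  complexity_cartier_operator_general F a r hr m
end

section
/- Every factor of the infinite word 𝔭₂ of length m occurs in its prefix of length 2^{m+1} − 1 (the prefix W₀W₁⋯W_m): for every integer m ≥ 1 and every j : ℕ, there exists i : ℕ with i + m ≤ 2^{m+1} − 1 such that 𝔭₂(i + t) = 𝔭₂(j + t) for all t < m. -/
/-!
The Mersenne numbers below `2^k - 1` sum to only `2^k - k - 1`. Hence a sum of distinct Mersenne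
numbers lying in `[2^k - 1, 2^{k+1} - 1)` must use `2^k - 1`, so `𝔭₂` is invariant under the shift
by `2^k - 1` on `[0, 2^k - 2]`, and no such sum lies in the gap `[2^k - k, 2^k - 2]`. Together
these make `𝔭₂` invariant under the shift by `2^t` on `[2^t - t, 2^{t+1} - 3]`. A window of
length `m` reaching beyond position `2^{m+1} - 2` is the image of an earlier window under one of
these shifts, and induction on its position moves it into the prefix.
-/

open Finset

/-- The `n` with `p2 n = 1`; as `mersenne 0 = 0`, the condition `1 ≤ j` of `p2` can be dropped. -/
def IsMersenneSum (n : ℕ) : Prop :=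
  ∃ J : Finset ℕ, ∑ j ∈ J, mersenne j = n

open Classical in
theorem p2_eq_ite (n : ℕ) : p2 n = if IsMersenneSum n then 1 else 0 := by
  refine if_congr ⟨fun ⟨J, _, hJ⟩ => ⟨J, hJ.symm⟩, fun ⟨J, hJ⟩ => ⟨J.erase 0, ?_, ?_⟩⟩ rfl rfl
  · exact fun j hj => Nat.pos_of_ne_zero (ne_of_mem_erase hj)
  · rw [← hJ]
    exact (sum_erase J mersenne_zero).symm

open Classical in
theorem p2_congr {a b : ℕ} (h : IsMersenneSum a ↔ IsMersenneSum b) : p2 a = p2 b := by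
  rw [p2_eq_ite, p2_eq_ite]
  exact if_congr h rfl rfl

theorem sum_range_mersenne_add (k : ℕ) : ∑ j ∈ range k, mersenne j + k + 1 = 2 ^ k := by
  induction k with
  | zero => simp
  | succ k ih =>
    have := succ_mersenne k
    rw [sum_range_succ, pow_succ]
    omega

theorem sum_mersenne_add_le_of_subset {J : Finset ℕ} {k : ℕ} (hJ : J ⊆ range k) :
    ∑ j ∈ J, mersenne j + k + 1 ≤ 2 ^ k := by
  have := sum_le_sum_of_subset (f := mersenne) hJ
  have := sum_range_mersenne_add k
  omega

theorem subset_range_of_sum_mersenne_lt {J : Finset ℕ} {k : ℕ}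
    (hJ : ∑ j ∈ J, mersenne j < mersenne k) : J ⊆ range k := fun _ hj =>
  mem_range.2 <| mersenne_lt_mersenne.1 <|
    (single_le_sum (fun _ _ => Nat.zero_le _) hj).trans_lt hJ

theorem IsMersenneSum.add_le_two_pow {n k : ℕ} (h : IsMersenneSum n) (hn : n < mersenne k) :
    n + k + 1 ≤ 2 ^ k := by
  obtain ⟨J, rfl⟩ := h
  exact sum_mersenne_add_le_of_subset (subset_range_of_sum_mersenne_lt hn)

theorem not_isMersenneSum_of_gap {n k : ℕ} (h₁ : 2 ^ k ≤ n + k) (h₂ : n + 2 ≤ 2 ^ k) :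
    ¬IsMersenneSum n := fun h => by
  have := h.add_le_two_pow (k := k) (by have := succ_mersenne k; omega)
  omega

theorem isMersenneSum_add_mersenne_iff {r k : ℕ} (hr : r + 2 ≤ 2 ^ k) :
    IsMersenneSum (r + mersenne k) ↔ IsMersenneSum r := by
  have hk := succ_mersenne k
  have hk' := succ_mersenne (k + 1)
  rw [pow_succ] at hk'
  have hk0 : k ≠ 0 := by
    rintro rfl
    simp at hr
  constructor
  · rintro ⟨J, hJ⟩
    have hkJ : k ∈ J := by
      by_contra hkJ
      have hJk : J ⊆ range (k + 1) := subset_range_of_sum_mersenne_lt (by omega)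
      rw [range_add_one, subset_insert_iff_of_notMem hkJ] at hJk
      have := sum_mersenne_add_le_of_subset hJk
      omega
    refine ⟨J.erase k, ?_⟩
    have := sum_erase_add J mersenne hkJ
    omega
  · rintro ⟨J, rfl⟩
    have hkJ : k ∉ J := fun hkJ =>
      (mem_range.1 (subset_range_of_sum_mersenne_lt (by omega) hkJ)).false
    exact ⟨insert k J, by rw [sum_insert hkJ, add_comm]⟩

theorem isMersenneSum_add_two_pow_iff {n t : ℕ} (h₁ : 2 ^ t ≤ n + t) (h₂ : n + 3 ≤ 2 ^ (t + 1)) :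
    IsMersenneSum (n + 2 ^ t) ↔ IsMersenneSum n := by
  have ht := succ_mersenne t
  have ht' := succ_mersenne (t + 1)
  rw [pow_succ] at h₂ ht'
  by_cases hn : 2 ^ t ≤ n + 1
  · obtain ⟨r, rfl⟩ : ∃ r, n = r + mersenne t := ⟨n - mersenne t, by omega⟩
    rw [show r + mersenne t + 2 ^ t = r + mersenne (t + 1) by omega,
      isMersenneSum_add_mersenne_iff (by omega), isMersenneSum_add_mersenne_iff (by omega)]
  · refine iff_of_false (not_isMersenneSum_of_gap (k := t + 1) ?_ ?_)
      (not_isMersenneSum_of_gap h₁ (by omega)) <;> rw [pow_succ] <;> omega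

theorem p2_add_mersenne {r k : ℕ} (hr : r + 2 ≤ 2 ^ k) : p2 (r + mersenne k) = p2 r :=
  p2_congr (isMersenneSum_add_mersenne_iff hr)

theorem p2_add_two_pow {n t : ℕ} (h₁ : 2 ^ t ≤ n + t) (h₂ : n + 3 ≤ 2 ^ (t + 1)) :
    p2 (n + 2 ^ t) = p2 n :=
  p2_congr (isMersenneSum_add_two_pow_iff h₁ h₂)

theorem exists_lt_factor_eq {m j : ℕ} (h : 2 ^ (m + 1) ≤ j + m) :
    ∃ j' < j, ∀ t < m, p2 (j' + t) = p2 (j + t) := by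
  have h2 : 2 ≤ j + m := (Nat.le_self_pow (by simp) 2).trans h
  obtain ⟨K, hK⟩ : ∃ K, Nat.log 2 (j + m) = K + 1 :=
    Nat.exists_eq_add_one.2 (Nat.log_pos one_lt_two h2)
  have hlo : 2 ^ (K + 1) ≤ j + m := hK ▸ Nat.pow_log_le_self 2 (by omega)
  have hhi : j + m < 2 ^ (K + 2) := by
    have := Nat.lt_pow_succ_log_self one_lt_two (j + m)
    rwa [hK] at this
  have hmK : m ≤ K := by
    by_contra! hKm
    have := Nat.pow_le_pow_right (n := 2) (by norm_num) (show K + 2 ≤ m + 1 by omega)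
    omega
  have hK2 : 2 ^ (K + 2) = 2 ^ (K + 1) * 2 := pow_succ 2 (K + 1)
  have hK1 : 2 ^ (K + 1) = 2 ^ K * 2 := pow_succ 2 K
  have hKpow : K < 2 ^ K := Nat.lt_two_pow_self
  have hmer := succ_mersenne (K + 1)
  -- The window `[j, j + m)` ends in `[2^(K+1) - 1, 2^(K+2) - 2]`; shift it by `2^K` if it
  -- contains `2^(K+1) - 2`, by `2^(K+1)` if it ends at `2^(K+2) - 2`, else by `2^(K+1) - 1`.
  by_cases hjK : j + 2 ≤ 2 ^ (K + 1)
  · obtain ⟨j', rfl⟩ : ∃ j', j = j' + 2 ^ K := ⟨j - 2 ^ K, by omega⟩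
    refine ⟨j', by omega, fun t ht => ?_⟩
    rw [add_right_comm, p2_add_two_pow (by omega) (by omega)]
  by_cases hjm : j + m + 1 = 2 ^ (K + 2)
  · obtain ⟨j', rfl⟩ : ∃ j', j = j' + 2 ^ (K + 1) := ⟨j - 2 ^ (K + 1), by omega⟩
    refine ⟨j', by omega, fun t ht => ?_⟩
    rw [add_right_comm, p2_add_two_pow (by omega) (by omega)]
  · obtain ⟨j', rfl⟩ : ∃ j', j = j' + mersenne (K + 1) := ⟨j - mersenne (K + 1), by omega⟩
    refine ⟨j', by omega, fun t ht => ?_⟩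
    rw [add_right_comm, p2_add_mersenne (by omega)]

theorem p2_factors_occur_in_prefix_general (m : ℕ) (j : ℕ) :
    ∃ i : ℕ, i + m ≤ 2 ^ (m + 1) - 1 ∧ ∀ t : ℕ, t < m → p2 (i + t) = p2 (j + t) := by
  induction j using Nat.strong_induction_on with
  | _ j ih =>
    by_cases hj : j + m ≤ 2 ^ (m + 1) - 1
    · exact ⟨j, hj, fun _ _ => rfl⟩
    obtain ⟨j', hj', hfac⟩ := exists_lt_factor_eq (m := m) (j := j) (by omega)
    obtain ⟨i, hi, hfac'⟩ := ih j' hj'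
    exact ⟨i, hi, fun t ht => (hfac' t ht).trans (hfac t ht)⟩

/-- Every factor of length `m` of the infinite word `𝔭₂` occurs in its prefix
`W₀W₁⋯W_m` of length `2^{m+1} − 1`. -/
theorem p2_factors_occur_in_prefix (m : ℕ) (hm : 1 ≤ m) (j : ℕ) :
    ∃ i : ℕ, i + m ≤ 2 ^ (m + 1) - 1 ∧ ∀ t : ℕ, t < m → p2 (i + t) = p2 (j + t) :=
  p2_factors_occur_in_prefix_general m j
end
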